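/- arXiv:1806.05702 — 2 statements merged into one kernel-verified Lean document; each statement's English description precedes it below -/
import Mathlib

section
/- For 0 < H < 1, the maximal uniform oscillation of the class 𝔛^H is max over x ∈ 𝔛^H and s,t ∈ [0,1] of |x(t) − x(s)|, and it equals (2^H + 3)/(6(2^H − 1)). It is attained at s = 1/3 and t = 5/6 by the function x̃^H = e_{0,0} + Σ_{m=1}^∞ 2^{m(1/2−H)} (Σ_{k=0}^{2^{m−1}−1} e_{m,k} − Σ_{k=2^{m−1}}^{2^m−1} e_{m,k}). -/
open Filter Finset Set MeasureTheory ProbabilityTheory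

noncomputable def e00 (t : ℝ) : ℝ := max (min t (1 - t)) 0

noncomputable def fs (m : ℕ) (k : ℤ) (t : ℝ) : ℝ :=
  (2 : ℝ) ^ (-(m : ℝ) / 2) * e00 ((2 : ℝ) ^ m * t - (k : ℝ))

def IsSign (θ : ℕ → ℕ → ℝ) : Prop := ∀ m k, θ m k = 1 ∨ θ m k = -1

noncomputable def tlTerm (H : ℝ) (θ : ℕ → ℕ → ℝ) (m : ℕ) (t : ℝ) : ℝ :=
  (2 : ℝ) ^ ((m : ℝ) * (1 / 2 - H)) *
    ∑ k ∈ Finset.range (2 ^ m), θ m k * fs m (k : ℤ) t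

noncomputable def sPartial (H : ℝ) (θ : ℕ → ℕ → ℝ) (n : ℕ) (t : ℝ) : ℝ :=
  ∑ m ∈ Finset.range n, tlTerm H θ m t

def MemX (H : ℝ) (x : ℝ → ℝ) : Prop :=
  ∃ θ : ℕ → ℕ → ℝ, IsSign θ ∧ ∀ t : ℝ, x t = ∑' m : ℕ, tlTerm H θ m t

noncomputable def xTL (H : ℝ) (t : ℝ) : ℝ := ∑' m : ℕ, tlTerm H (fun _ _ => 1) m t

noncomputable def dyadicSum (p : ℝ) (x : ℝ → ℝ) (n : ℕ) (t : ℝ) : ℝ :=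
  ∑ k ∈ Finset.range (2 ^ n),
    if (k : ℝ) / 2 ^ n ≤ t then |x (((k : ℝ) + 1) / 2 ^ n) - x ((k : ℝ) / 2 ^ n)| ^ p else 0

noncomputable def nuFloor (h : ℝ) : ℤ := ⌊-(Real.logb 2 h)⌋

noncomputable def omegaH (H h : ℝ) : ℝ :=
  h * (2 : ℝ) ^ (((nuFloor h : ℝ) - 1) * (1 - H)) / ((2 : ℝ) ^ (1 - H) - 1) +
    (2 : ℝ) ^ ((1 - (nuFloor h : ℝ)) * H) / (3 * (1 - (2 : ℝ) ^ (-H)))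

noncomputable def thetaTilde : ℕ → ℕ → ℝ := fun m k =>
  if m = 0 then 1 else if k < 2 ^ (m - 1) then 1 else -1

noncomputable def xTilde (H : ℝ) (t : ℝ) : ℝ := ∑' m : ℕ, tlTerm H thetaTilde m t

/-! With `q = 2 ^ (-H) ∈ [1/2, 1)`, the `m`-th level of `x` is `q ^ m` times a `±1`-signed sum of
tents with disjoint supports, so at `t` it is bounded by `q ^ m * ψ (2 ^ m * t)`, where `ψ` is the
1-periodic tent `periodicTent`; moreover `ψ (2 ^ (m + 1) * t)` is the tent map applied to
`ψ (2 ^ m * t)`. Along a tent-map orbit `a m`, the potential `min a (1/3)` satisfies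
`a m ≤ q / 3 + min (a m) (1/3) - q * min (a (m + 1)) (1/3)`, so the weighted orbit sum telescopes to
at most `min (a 0) (1/3) + q / (3 * (1 - q))`. Combined with an elementary inequality for level `0`
this bounds `|x t - x s|` by `1/6 + 2q / (3(1 - q)) = (2^H + 3) / (6(2^H - 1))`. For `x̃^H` every
level `m ≥ 1` contributes `q ^ m / 3` at `1/3` and `-q ^ m / 3` at `5/6` (both points have tent
orbit constantly `1/3`), which attains the bound. -/

lemma e00_nonneg (t : ℝ) : 0 ≤ e00 t := le_max_right _ _

lemma e00_le_half (t : ℝ) : e00 t ≤ 1 / 2 := by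
  refine max_le ?_ (by norm_num)
  rcases le_total t (1 / 2) with h | h
  · exact (min_le_left _ _).trans h
  · exact (min_le_right _ _).trans (by linarith)

lemma e00_of_nonpos {t : ℝ} (h : t ≤ 0) : e00 t = 0 :=
  max_eq_right ((min_le_left _ _).trans h)

lemma e00_of_one_le {t : ℝ} (h : 1 ≤ t) : e00 t = 0 :=
  max_eq_right ((min_le_right _ _).trans (by linarith))

lemma e00_of_mem_Icc {t : ℝ} (h : t ∈ Icc (0 : ℝ) 1) : e00 t = min t (1 - t) :=
  max_eq_left (le_min h.1 (by linarith [h.2]))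

noncomputable def periodicTent (u : ℝ) : ℝ := e00 (Int.fract u)

lemma periodicTent_nonneg (u : ℝ) : 0 ≤ periodicTent u := e00_nonneg _

lemma periodicTent_le_half (u : ℝ) : periodicTent u ≤ 1 / 2 := e00_le_half _

lemma periodicTent_eq_min (u : ℝ) :
    periodicTent u = min (Int.fract u) (1 - Int.fract u) :=
  e00_of_mem_Icc ⟨Int.fract_nonneg u, (Int.fract_lt_one u).le⟩

lemma e00_eq_periodicTent {t : ℝ} (h : t ∈ Icc (0 : ℝ) 1) : e00 t = periodicTent t := by
  rcases h.2.eq_or_lt with rfl | h1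
  · rw [periodicTent, Int.fract_one, e00_of_one_le le_rfl, e00_of_nonpos le_rfl]
  · rw [periodicTent, Int.fract_eq_self.2 ⟨h.1, h1⟩]

lemma periodicTent_two_mul (u : ℝ) :
    periodicTent (2 * u) = min (2 * periodicTent u) (1 - 2 * periodicTent u) := by
  have hf0 := Int.fract_nonneg u
  have hf1 := Int.fract_lt_one u
  have hsub : u - Int.fract u = ⌊u⌋ := by rw [Int.fract]; ring
  have hfract : Int.fract (2 * u) = if 2 * Int.fract u < 1 then 2 * Int.fract u
      else 2 * Int.fract u - 1 := by
    split_ifs with h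
    · exact Int.fract_eq_iff.2 ⟨by linarith, h, 2 * ⌊u⌋, by push_cast; linarith⟩
    · exact Int.fract_eq_iff.2 ⟨by linarith, by linarith, 2 * ⌊u⌋ + 1, by push_cast; linarith⟩
  rw [periodicTent_eq_min, periodicTent_eq_min, hfract]
  split_ifs <;> simp only [min_def] <;> split_ifs <;> linarith

lemma periodicTent_two_pow_mul {u : ℝ} (hu : periodicTent u = 1 / 3) (m : ℕ) :
    periodicTent (2 ^ m * u) = 1 / 3 := by
  induction m with
  | zero => simpa using hu
  | succ m ih => rw [pow_succ', mul_assoc, periodicTent_two_mul, ih]; norm_num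

lemma e00_sub_natCast {u : ℝ} (hu : 0 ≤ u) (k : ℕ) :
    e00 (u - k) = if k = ⌊u⌋₊ then periodicTent u else 0 := by
  split_ifs with hk
  · have : Int.fract u = u - k := Int.fract_eq_iff.2
      ⟨by linarith [hk ▸ Nat.floor_le hu], by linarith [hk ▸ Nat.lt_floor_add_one u], k,
        by push_cast; ring⟩
    rw [periodicTent, this]
  · rcases Nat.lt_or_gt_of_ne hk with hlt | hgt
    · have : ((k + 1 : ℕ) : ℝ) ≤ u := (Nat.le_floor_iff hu).1 hlt
      exact e00_of_one_le (by push_cast at this; linarith)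
    · exact e00_of_nonpos (by linarith [(Nat.floor_lt hu).1 hgt])

lemma sum_mul_e00_sub_natCast {u : ℝ} (hu : 0 ≤ u) (c : ℕ → ℝ) (N : ℕ) :
    ∑ k ∈ Finset.range N, c k * e00 (u - k) =
      if ⌊u⌋₊ < N then c ⌊u⌋₊ * periodicTent u else 0 := by
  simp_rw [e00_sub_natCast hu, mul_ite, mul_zero, Finset.sum_ite_eq', Finset.mem_range]

lemma abs_sum_mul_e00_sub_natCast_le {c : ℕ → ℝ} (hc : ∀ k, |c k| ≤ 1) (N : ℕ) (u : ℝ) :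
    |∑ k ∈ Finset.range N, c k * e00 (u - k)| ≤ periodicTent u := by
  rcases lt_or_ge u 0 with hu | hu
  · rw [Finset.sum_eq_zero fun k _ => by
      rw [e00_of_nonpos (by linarith [k.cast_nonneg (α := ℝ)]), mul_zero]]
    simpa using periodicTent_nonneg u
  · rw [sum_mul_e00_sub_natCast hu]
    split_ifs
    · rw [abs_mul, abs_of_nonneg (periodicTent_nonneg u)]
      exact mul_le_of_le_one_left (periodicTent_nonneg u) (hc _)
    · simpa using periodicTent_nonneg u

lemma tlTerm_eq (H : ℝ) (θ : ℕ → ℕ → ℝ) (m : ℕ) (t : ℝ) :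
    tlTerm H θ m t =
      ((2 : ℝ) ^ (-H)) ^ m * ∑ k ∈ Finset.range (2 ^ m), θ m k * e00 (2 ^ m * t - k) := by
  have hscale : (2 : ℝ) ^ ((m : ℝ) * (1 / 2 - H)) * (2 : ℝ) ^ (-(m : ℝ) / 2) =
      ((2 : ℝ) ^ (-H)) ^ m := by
    rw [← Real.rpow_natCast, ← Real.rpow_mul zero_le_two, ← Real.rpow_add zero_lt_two]
    ring_nf
  rw [tlTerm, ← hscale, mul_assoc]
  congr 1
  rw [Finset.mul_sum]
  simp only [fs, Int.cast_natCast]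
  exact Finset.sum_congr rfl fun _ _ => by ring

lemma IsSign.abs_eq_one {θ : ℕ → ℕ → ℝ} (hθ : IsSign θ) (m k : ℕ) : |θ m k| = 1 := by
  rcases hθ m k with h | h <;> simp [h]

lemma abs_tlTerm_le {θ : ℕ → ℕ → ℝ} (hθ : IsSign θ) (H : ℝ) (m : ℕ) (t : ℝ) :
    |tlTerm H θ m t| ≤ ((2 : ℝ) ^ (-H)) ^ m * periodicTent (2 ^ m * t) := by
  rw [tlTerm_eq, abs_mul, abs_of_nonneg (by positivity)]
  exact mul_le_mul_of_nonneg_left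
    (abs_sum_mul_e00_sub_natCast_le (fun k => (hθ.abs_eq_one m k).le) _ _) (by positivity)

lemma tlTerm_of_floor_lt (H : ℝ) (θ : ℕ → ℕ → ℝ) (m : ℕ) {t : ℝ} (ht : 0 ≤ t)
    (h : ⌊2 ^ m * t⌋₊ < 2 ^ m) :
    tlTerm H θ m t = ((2 : ℝ) ^ (-H)) ^ m * (θ m ⌊2 ^ m * t⌋₊ * periodicTent (2 ^ m * t)) := by
  rw [tlTerm_eq, sum_mul_e00_sub_natCast (by positivity), if_pos h]

lemma tlTerm_zero (H : ℝ) (θ : ℕ → ℕ → ℝ) (t : ℝ) : tlTerm H θ 0 t = θ 0 0 * e00 t := by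
  simp [tlTerm_eq]

lemma two_rpow_neg_lt_one {H : ℝ} (hH : 0 < H) : (2 : ℝ) ^ (-H) < 1 :=
  Real.rpow_lt_one_of_one_lt_of_neg one_lt_two (neg_neg_of_pos hH)

lemma summable_tlTerm {θ : ℕ → ℕ → ℝ} (hθ : IsSign θ) {H : ℝ} (hH : 0 < H) (t : ℝ) :
    Summable fun m => tlTerm H θ m t := by
  refine Summable.of_norm_bounded ((summable_geometric_of_lt_one (by positivity)
    (two_rpow_neg_lt_one hH)).mul_right (1 / 2)) fun m => ?_
  exact (abs_tlTerm_le hθ H m t).trans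
    (mul_le_mul_of_nonneg_left (periodicTent_le_half _) (by positivity))

section TentOrbit

variable {q : ℝ}

lemma summable_pow_mul_of_nonneg_of_le (hq0 : 0 ≤ q) (hq1 : q < 1) {a : ℕ → ℝ} {C : ℝ}
    (ha0 : ∀ m, 0 ≤ a m) (ha1 : ∀ m, a m ≤ C) : Summable fun m => q ^ m * a m :=
  .of_nonneg_of_le (fun m => mul_nonneg (pow_nonneg hq0 m) (ha0 m))
    (fun m => mul_le_mul_of_nonneg_left (ha1 m) (pow_nonneg hq0 m))
    ((summable_geometric_of_lt_one hq0 hq1).mul_right C)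

lemma le_min_third_sub_mul_add (hq : 1 / 2 ≤ q) {a b : ℝ} (ha1 : a ≤ 1 / 2)
    (hb : b = min (2 * a) (1 - 2 * a)) :
    a ≤ min a (1 / 3) - q * min b (1 / 3) + q / 3 := by
  have hdeficit : 0 ≤ 1 / 3 - min b (1 / 3) := by linarith [min_le_right b (1 / 3)]
  have hhalf : a - min a (1 / 3) ≤ (1 / 3 - min b (1 / 3)) / 2 := by
    subst hb; simp only [min_def]; split_ifs <;> linarith
  nlinarith

lemma abs_sub_add_mul_min_third_le (hq : 1 / 2 ≤ q) {a b : ℝ} (ha : a ≤ 1 / 2) (hb : b ≤ 1 / 2) :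
    |a - b| + q * (min (min (2 * a) (1 - 2 * a)) (1 / 3) + min (min (2 * b) (1 - 2 * b)) (1 / 3))
      ≤ 1 / 6 + 2 * q / 3 := by
  have hdeficit : ∀ x : ℝ, 0 ≤ 1 / 3 - min (min (2 * x) (1 - 2 * x)) (1 / 3) :=
    fun x => by linarith [min_le_right (min (2 * x) (1 - 2 * x)) (1 / 3)]
  have hupper : ∀ x ≤ 1 / 2, x + q * min (min (2 * x) (1 - 2 * x)) (1 / 3) ≤ 1 / 3 + q / 3 := by
    intro x hx
    have : x - (1 / 3 - min (min (2 * x) (1 - 2 * x)) (1 / 3)) / 2 ≤ 1 / 3 := by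
      simp only [min_def]; split_ifs <;> linarith
    nlinarith [hdeficit x]
  have hlower : ∀ y, -y + q * min (min (2 * y) (1 - 2 * y)) (1 / 3) ≤ q / 3 - 1 / 6 := by
    intro y
    have : -y - (1 / 3 - min (min (2 * y) (1 - 2 * y)) (1 / 3)) / 2 ≤ -1 / 6 := by
      linarith [(min_le_left _ (1 / 3 : ℝ)).trans (min_le_left (2 * y) (1 - 2 * y))]
    nlinarith [hdeficit y]
  rcases abs_cases (a - b) with ⟨h, -⟩ | ⟨h, -⟩
  · linarith [hupper a ha, hlower b]
  · linarith [hupper b hb, hlower a]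

lemma tsum_pow_mul_tentOrbit_le (hq : 1 / 2 ≤ q) (hq1 : q < 1) {a : ℕ → ℝ}
    (ha0 : ∀ m, 0 ≤ a m) (ha1 : ∀ m, a m ≤ 1 / 2)
    (ha : ∀ m, a (m + 1) = min (2 * a m) (1 - 2 * a m)) :
    ∑' m, q ^ m * a m ≤ min (a 0) (1 / 3) + q / (3 * (1 - q)) := by
  have hq0 : 0 ≤ q := by linarith
  have hgeom := summable_geometric_of_lt_one hq0 hq1
  set g : ℕ → ℝ := fun m => q ^ m * min (a m) (1 / 3) with hg_def
  have hg : Summable g := summable_pow_mul_of_nonneg_of_le hq0 hq1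
    (fun m => le_min (ha0 m) (by norm_num)) (fun m => min_le_right _ _)
  have hg_succ : Summable fun m => g (m + 1) := (summable_nat_add_iff 1).2 hg
  have hsummable := summable_pow_mul_of_nonneg_of_le hq0 hq1 ha0 ha1
  have hstep : ∀ m, q ^ m * a m ≤ q ^ m * (q / 3) + (g m - g (m + 1)) := by
    intro m
    have := mul_le_mul_of_nonneg_left (le_min_third_sub_mul_add hq (ha1 m) (ha m))
      (pow_nonneg hq0 m)
    calc q ^ m * a m ≤ q ^ m * (min (a m) (1 / 3) - q * min (a (m + 1)) (1 / 3) + q / 3) := this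
      _ = _ := by simp only [hg_def, pow_succ]; ring
  have htelescope : ∑' m, (g m - g (m + 1)) = g 0 := by
    rw [hg.tsum_sub hg_succ, hg.tsum_eq_zero_add]; ring
  calc ∑' m, q ^ m * a m ≤ ∑' m, (q ^ m * (q / 3) + (g m - g (m + 1))) :=
        Summable.tsum_le_tsum hstep hsummable
          ((hgeom.mul_right _).add (hg.sub hg_succ))
    _ = min (a 0) (1 / 3) + q / (3 * (1 - q)) := by
        rw [(hgeom.mul_right _).tsum_add (hg.sub hg_succ), tsum_mul_right,
          tsum_geometric_of_lt_one hq0 hq1, htelescope]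
        simp only [hg_def, pow_zero, one_mul]
        field_simp [show 1 - q ≠ 0 by linarith]
        ring

lemma tsum_mul_periodicTent_two_pow_succ_le (hq : 1 / 2 ≤ q) (hq1 : q < 1) (u : ℝ) :
    ∑' m, q ^ m * periodicTent (2 ^ (m + 1) * u) ≤
      min (min (2 * periodicTent u) (1 - 2 * periodicTent u)) (1 / 3) + q / (3 * (1 - q)) := by
  have h := tsum_pow_mul_tentOrbit_le hq hq1 (a := fun m => periodicTent (2 ^ (m + 1) * u))
    (fun _ => periodicTent_nonneg _) (fun _ => periodicTent_le_half _)
    (fun m => by rw [pow_succ' 2 (m + 1), mul_assoc, periodicTent_two_mul])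
  rwa [zero_add, pow_one, periodicTent_two_mul] at h

end TentOrbit

lemma abs_tsum_sub_tsum_le {f g : ℕ → ℝ} (hf : Summable f) (hg : Summable g) :
    |∑' m, f m - ∑' m, g m| ≤ |f 0 - g 0| + ∑' m, |f (m + 1) - g (m + 1)| := by
  have hd : Summable fun m => |f m - g m| := (hf.sub hg).abs
  rw [← hf.tsum_sub hg, ← hd.tsum_eq_zero_add]
  simpa only [Real.norm_eq_abs] using norm_tsum_le_tsum_norm (f := fun m => f m - g m) hd

lemma half_le_two_rpow_neg {H : ℝ} (hH : H ≤ 1) : 1 / 2 ≤ (2 : ℝ) ^ (-H) := by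
  calc (1 / 2 : ℝ) = 2 ^ (-1 : ℝ) := by norm_num
    _ ≤ 2 ^ (-H) := Real.rpow_le_rpow_of_exponent_le one_le_two (by linarith)

theorem abs_tsum_tlTerm_sub_le {H : ℝ} (hH : H ∈ Ioo (0 : ℝ) 1) {θ : ℕ → ℕ → ℝ} (hθ : IsSign θ)
    {s t : ℝ} (hs : s ∈ Icc (0 : ℝ) 1) (ht : t ∈ Icc (0 : ℝ) 1) :
    |∑' m, tlTerm H θ m t - ∑' m, tlTerm H θ m s| ≤
      1 / 6 + 2 * (2 : ℝ) ^ (-H) / (3 * (1 - (2 : ℝ) ^ (-H))) := by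
  set q : ℝ := (2 : ℝ) ^ (-H)
  have hq : 1 / 2 ≤ q := half_le_two_rpow_neg hH.2.le
  have hq1 : q < 1 := two_rpow_neg_lt_one hH.1
  have hq0 : 0 ≤ q := by linarith
  set A : ℝ → ℕ → ℝ := fun u m => q ^ m * periodicTent (2 ^ (m + 1) * u)
  have hA : ∀ u, Summable (A u) := fun u => summable_pow_mul_of_nonneg_of_le hq0 hq1
    (fun _ => periodicTent_nonneg _) (fun _ => periodicTent_le_half _)
  have hlevel : ∀ m, |tlTerm H θ (m + 1) t - tlTerm H θ (m + 1) s| ≤ q * (A t m + A s m) := by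
    intro m
    calc _ ≤ |tlTerm H θ (m + 1) t| + |tlTerm H θ (m + 1) s| := abs_sub _ _
      _ ≤ _ := add_le_add (abs_tlTerm_le hθ H _ t) (abs_tlTerm_le hθ H _ s)
      _ = _ := by simp only [A, pow_succ]; ring
  have hT := summable_tlTerm hθ hH.1 t
  have hS := summable_tlTerm hθ hH.1 s
  calc _ ≤ |tlTerm H θ 0 t - tlTerm H θ 0 s| +
          ∑' m, |tlTerm H θ (m + 1) t - tlTerm H θ (m + 1) s| := abs_tsum_sub_tsum_le hT hS
    _ ≤ |periodicTent t - periodicTent s| + q * (∑' m, A t m + ∑' m, A s m) := by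
        rw [tlTerm_zero, tlTerm_zero, ← mul_sub, abs_mul, hθ.abs_eq_one, one_mul,
          e00_eq_periodicTent ht, e00_eq_periodicTent hs, ← (hA t).tsum_add (hA s),
          ← tsum_mul_left]
        exact add_le_add_right (Summable.tsum_le_tsum hlevel
          ((summable_nat_add_iff 1).2 (hT.sub hS).abs) (((hA t).add (hA s)).mul_left q)) _
    _ ≤ 1 / 6 + 2 * q / 3 + 2 * q * (q / (3 * (1 - q))) := by
        have horbits := mul_le_mul_of_nonneg_left
          (add_le_add (tsum_mul_periodicTent_two_pow_succ_le hq hq1 t)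
            (tsum_mul_periodicTent_two_pow_succ_le hq hq1 s)) hq0
        linarith [abs_sub_add_mul_min_third_le hq (periodicTent_le_half t)
          (periodicTent_le_half s)]
    _ = 1 / 6 + 2 * q / (3 * (1 - q)) := by
        field_simp [show 1 - q ≠ 0 by linarith]
        ring

lemma thetaTilde_isSign : IsSign thetaTilde := by
  intro m k
  unfold thetaTilde
  split_ifs <;> simp

lemma periodicTent_one_third : periodicTent (1 / 3) = 1 / 3 := by
  rw [← e00_eq_periodicTent ⟨by norm_num, by norm_num⟩, e00_of_mem_Icc ⟨by norm_num, by norm_num⟩]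
  norm_num

lemma periodicTent_five_thirds : periodicTent (5 / 3) = 1 / 3 := by
  have : Int.fract (5 / 3 : ℝ) = 2 / 3 :=
    Int.fract_eq_iff.2 ⟨by norm_num, by norm_num, 1, by norm_num⟩
  rw [periodicTent, this, e00_of_mem_Icc ⟨by norm_num, by norm_num⟩]
  norm_num

lemma tlTerm_thetaTilde_one_third (H : ℝ) (m : ℕ) :
    tlTerm H thetaTilde m (1 / 3) = ((2 : ℝ) ^ (-H)) ^ m / 3 := by
  have hu : (0 : ℝ) ≤ 2 ^ m * (1 / 3) := by positivity
  have h2m : (0 : ℝ) < 2 ^ m := by positivity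
  have hfloor : ⌊(2 : ℝ) ^ m * (1 / 3)⌋₊ < 2 ^ m :=
    (Nat.floor_lt hu).2 (by push_cast; linarith)
  have hsign : thetaTilde m ⌊(2 : ℝ) ^ m * (1 / 3)⌋₊ = 1 := by
    rcases m with _ | m
    · simp [thetaTilde]
    · simp only [thetaTilde, Nat.add_sub_cancel, if_neg m.succ_ne_zero,
        ite_eq_left_iff, not_lt]
      intro h
      have := (Nat.le_floor_iff hu).1 h
      push_cast at this
      rw [pow_succ] at this
      linarith [pow_pos (two_pos : (0 : ℝ) < 2) m]
  rw [tlTerm_of_floor_lt H _ m (by norm_num) hfloor, hsign,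
    periodicTent_two_pow_mul periodicTent_one_third]
  ring

lemma tlTerm_thetaTilde_five_sixths (H : ℝ) (j : ℕ) :
    tlTerm H thetaTilde (j + 1) (5 / 6) = -(((2 : ℝ) ^ (-H)) ^ (j + 1) / 3) := by
  have hu : (0 : ℝ) ≤ 2 ^ (j + 1) * (5 / 6) := by positivity
  have h2j : (0 : ℝ) < 2 ^ j := by positivity
  have hfloor : ⌊(2 : ℝ) ^ (j + 1) * (5 / 6)⌋₊ < 2 ^ (j + 1) :=
    (Nat.floor_lt hu).2 (by push_cast; rw [pow_succ]; linarith)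
  have hsign : thetaTilde (j + 1) ⌊(2 : ℝ) ^ (j + 1) * (5 / 6)⌋₊ = -1 := by
    simp only [thetaTilde, Nat.add_sub_cancel, if_neg j.succ_ne_zero, ite_eq_right_iff]
    intro h
    have := (Nat.floor_lt hu).1 h
    push_cast at this
    rw [pow_succ] at this
    linarith
  have hrescale : (2 : ℝ) ^ (j + 1) * (5 / 6) = 2 ^ j * (5 / 3) := by rw [pow_succ]; ring
  rw [tlTerm_of_floor_lt H _ _ (by norm_num) hfloor, hsign, hrescale,
    periodicTent_two_pow_mul periodicTent_five_thirds]
  ring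

theorem abs_xTilde_five_sixths_sub_one_third {H : ℝ} (hH : 0 < H) :
    |xTilde H (5 / 6) - xTilde H (1 / 3)| =
      1 / 6 + 2 * (2 : ℝ) ^ (-H) / (3 * (1 - (2 : ℝ) ^ (-H))) := by
  set q : ℝ := (2 : ℝ) ^ (-H)
  have hq0 : 0 ≤ q := by positivity
  have hq1 : q < 1 := two_rpow_neg_lt_one hH
  have hgeom := tsum_geometric_of_lt_one hq0 hq1
  have hone_third : xTilde H (1 / 3) = (1 - q)⁻¹ / 3 := by
    rw [xTilde, tsum_congr (tlTerm_thetaTilde_one_third H), tsum_div_const, hgeom]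
  have hfive_sixths : xTilde H (5 / 6) = 1 / 6 - q * (1 - q)⁻¹ / 3 := by
    rw [xTilde, (summable_tlTerm thetaTilde_isSign hH _).tsum_eq_zero_add, tlTerm_zero,
      tsum_congr (tlTerm_thetaTilde_five_sixths H), tsum_neg, tsum_div_const]
    simp_rw [pow_succ']
    rw [tsum_mul_left, hgeom, e00_of_mem_Icc ⟨by norm_num, by norm_num⟩]
    norm_num [thetaTilde]
    ring
  have h1q : 0 < 1 - q := by linarith
  rw [hfive_sixths, hone_third, abs_of_nonpos]
  · field_simp
    ring
  · have : 1 ≤ (1 - q)⁻¹ := one_le_inv₀ h1q |>.2 (by linarith)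
    nlinarith

lemma two_rpow_oscillation_eq {H : ℝ} (hH : 0 < H) :
    ((2 : ℝ) ^ H + 3) / (6 * ((2 : ℝ) ^ H - 1)) =
      1 / 6 + 2 * (2 : ℝ) ^ (-H) / (3 * (1 - (2 : ℝ) ^ (-H))) := by
  have h1 : 1 < (2 : ℝ) ^ H := Real.one_lt_rpow one_lt_two hH
  rw [Real.rpow_neg zero_le_two]
  field_simp [show (2 : ℝ) ^ H - 1 ≠ 0 by linarith]
  ring

theorem stmt6 (H : ℝ) (hH : H ∈ Set.Ioo (0:ℝ) 1) :
    IsGreatest {y : ℝ | ∃ x s t, MemX H x ∧ s ∈ Set.Icc (0:ℝ) 1 ∧ t ∈ Set.Icc (0:ℝ) 1 ∧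
        y = |x t - x s|} (((2:ℝ)^H + 3) / (6 * ((2:ℝ)^H - 1))) ∧
    MemX H (xTilde H) ∧
    |xTilde H (5/6) - xTilde H (1/3)| = ((2:ℝ)^H + 3) / (6 * ((2:ℝ)^H - 1)) := by
  have hmem : MemX H (xTilde H) := ⟨thetaTilde, thetaTilde_isSign, fun _ => rfl⟩
  have hval : |xTilde H (5 / 6) - xTilde H (1 / 3)| = ((2:ℝ)^H + 3) / (6 * ((2:ℝ)^H - 1)) := by
    rw [two_rpow_oscillation_eq hH.1]
    exact abs_xTilde_five_sixths_sub_one_third hH.1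
  refine ⟨⟨⟨xTilde H, 1 / 3, 5 / 6, hmem, by norm_num, by norm_num, hval.symm⟩, ?_⟩, hmem, hval⟩
  rintro y ⟨x, s, t, ⟨θ, hθ, hx⟩, hs, ht, rfl⟩
  rw [hx t, hx s, two_rpow_oscillation_eq hH.1]
  exact abs_tsum_tlTerm_sub_le hH hθ hs ht
end

section
/- For 0 < H < 1 and ω_H as defined, the modulus of continuity bound for x^H is sharp: limsup as h ↓ 0 of max over t ∈ [0,1−h] of |x^H(t+h) − x^H(t)| / ω_H(h) equals 1. -/
/-! On `[0, 1]` the Takagi–Landsberg function is `x(t) = ∑ cᵐ ‖2ᵐ t‖` with `c = 2^(-H)` and `‖·‖`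
the distance to the nearest integer. For an increment `h` the differences
`dₘ = |‖2ᵐ (t + h)‖ - ‖2ᵐ t‖|` satisfy `dₘ ≤ 2ᵐ h` and, since doubling acts on `‖·‖` by the tent
map, `dₘ₊₁ ≤ 1 - 2 dₘ`. Use the first bound for `m < ν(h) - 1`; for the remaining terms, under the
second constraint (and `c ≥ 1/2`) the weighted sum `∑ cᵐ dₘ` is largest for `dₘ ≡ 1/3`. Together
this is exactly `|x(t + h) - x(t)| ≤ ω_H(h)`. At `t = 0`, `h = 1 / (3 · 2ⁿ)` one computes
`x(h) = ω_H(h) - h / (2c - 1)` while `h / ω_H(h) → 0`, so the ratio tends to `1`. -/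

open Filter Finset Set MeasureTheory ProbabilityTheory

noncomputable def distNearestInt (u : ℝ) : ℝ := |u - round u|

namespace distNearestInt

lemma nonneg (u : ℝ) : 0 ≤ distNearestInt u := abs_nonneg _

lemma le_half (u : ℝ) : distNearestInt u ≤ 1 / 2 := abs_sub_round u

lemma le_abs_sub_intCast (u : ℝ) (n : ℤ) : distNearestInt u ≤ |u - n| := round_le u n

lemma add_intCast (u : ℝ) (n : ℤ) : distNearestInt (u + n) = distNearestInt u := by
  rw [distNearestInt, distNearestInt, round_add_intCast, Int.cast_add, add_sub_add_right_eq_sub]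

lemma neg (u : ℝ) : distNearestInt (-u) = distNearestInt u := by
  have key : ∀ u : ℝ, distNearestInt (-u) ≤ distNearestInt u := fun u =>
    calc distNearestInt (-u) ≤ |-u - ((-round u : ℤ) : ℝ)| := le_abs_sub_intCast _ _
      _ = distNearestInt u := by rw [distNearestInt, Int.cast_neg, ← abs_neg]; ring_nf
  exact le_antisymm (key u) (by simpa using key (-u))

lemma eq_min {u : ℝ} (h0 : 0 ≤ u) (h1 : u ≤ 1) : distNearestInt u = min u (1 - u) := by
  rcases h1.lt_or_eq with h1 | rfl
  · rw [distNearestInt, abs_sub_round_eq_min, Int.fract_eq_self.2 ⟨h0, h1⟩]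
  · simp [distNearestInt]

lemma eq_self {u : ℝ} (h0 : 0 ≤ u) (h1 : u ≤ 1 / 2) : distNearestInt u = u := by
  rw [eq_min h0 (by linarith), min_eq_left (by linarith)]

lemma abs_sub_le (u v : ℝ) : |distNearestInt u - distNearestInt v| ≤ |u - v| := by
  have key : ∀ u v : ℝ, distNearestInt u ≤ |u - v| + distNearestInt v := fun u v =>
    calc distNearestInt u ≤ |u - round v| := le_abs_sub_intCast u (round v)
      _ = |(u - v) + (v - round v)| := by ring_nf
      _ ≤ |u - v| + distNearestInt v := abs_add_le _ _
  rw [abs_sub_le_iff]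
  constructor
  · linarith [key u v]
  · linarith [key v u, abs_sub_comm u v]

lemma two_mul (u : ℝ) :
    distNearestInt (2 * u) = min (2 * distNearestInt u) (1 - 2 * distNearestInt u) := by
  have hshift : 2 * u = 2 * (u - round u) + ((2 * round u : ℤ) : ℝ) := by push_cast; ring
  have heven : distNearestInt (2 * (u - round u)) = distNearestInt (2 * distNearestInt u) := by
    rcases abs_choice (u - round u) with h | h <;> rw [show distNearestInt u = _ from h]
    rw [mul_neg, neg]
  rw [hshift, add_intCast, heven]
  exact eq_min (by linarith [nonneg u]) (by linarith [le_half u])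

lemma two_pow_div_three (k : ℕ) : distNearestInt (2 ^ k / 3) = 1 / 3 := by
  induction k with
  | zero => norm_num [eq_self]
  | succ k ih =>
    rw [pow_succ, mul_comm, mul_div_assoc, two_mul, ih]
    norm_num

end distNearestInt

lemma e00_eq_zero_of_le_zero {v : ℝ} (h : v ≤ 0) : e00 v = 0 :=
  max_eq_right ((min_le_left _ _).trans h)

lemma e00_eq_zero_of_one_le {v : ℝ} (h : 1 ≤ v) : e00 v = 0 :=
  max_eq_right ((min_le_right _ _).trans (by linarith))

lemma e00_eq_distNearestInt_of_mem_Icc {v : ℝ} (h0 : 0 ≤ v) (h1 : v ≤ 1) :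
    e00 v = distNearestInt v := by
  rw [distNearestInt.eq_min h0 h1, e00, max_eq_left (le_min h0 (by linarith))]

/-- Only the term `k = ⌊u⌋₊` can be nonzero (at `u = N` none is, and both sides vanish). -/
lemma sum_range_e00_sub {N : ℕ} {u : ℝ} (h0 : 0 ≤ u) (hN : u ≤ N) :
    ∑ k ∈ Finset.range N, e00 (u - k) = distNearestInt u := by
  have hfloor : (⌊u⌋₊ : ℝ) ≤ u := Nat.floor_le h0
  have hlt : u < ⌊u⌋₊ + 1 := Nat.lt_floor_add_one u
  rw [Finset.sum_eq_single ⌊u⌋₊]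
  · rw [e00_eq_distNearestInt_of_mem_Icc (by linarith) (by linarith), ← Int.cast_natCast,
      ← sub_add_cancel u ((⌊u⌋₊ : ℤ) : ℝ), distNearestInt.add_intCast, sub_add_cancel]
  · intro k _ hk
    rcases hk.lt_or_gt with hk | hk
    · have : (k : ℝ) + 1 ≤ ⌊u⌋₊ := by exact_mod_cast hk
      exact e00_eq_zero_of_one_le (by linarith)
    · have : (⌊u⌋₊ : ℝ) + 1 ≤ k := by exact_mod_cast hk
      exact e00_eq_zero_of_le_zero (by linarith)
  · intro hk
    have : (N : ℝ) ≤ ⌊u⌋₊ := by exact_mod_cast not_lt.1 (Finset.mem_range.not.1 hk)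
    exact e00_eq_zero_of_le_zero (by linarith)

lemma tlTerm_one_eq {H t : ℝ} (m : ℕ) (h0 : 0 ≤ t) (h1 : t ≤ 1) :
    tlTerm H (fun _ _ => 1) m t = ((2 : ℝ) ^ (-H)) ^ m * distNearestInt (2 ^ m * t) := by
  have hsum : ∑ k ∈ Finset.range (2 ^ m), e00 (2 ^ m * t - k) = distNearestInt (2 ^ m * t) :=
    sum_range_e00_sub (by positivity) (by push_cast; nlinarith [pow_pos (two_pos : (0 : ℝ) < 2) m])
  have hscale : (2 : ℝ) ^ ((m : ℝ) * (1 / 2 - H)) * (2 : ℝ) ^ (-(m : ℝ) / 2) =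
      ((2 : ℝ) ^ (-H)) ^ m := by
    rw [← Real.rpow_add two_pos, ← Real.rpow_mul_natCast two_pos.le]
    ring_nf
  simp only [tlTerm, fs, Int.cast_natCast, one_mul, ← Finset.mul_sum, hsum, ← mul_assoc, hscale]

lemma xTL_eq_tsum {H t : ℝ} (h0 : 0 ≤ t) (h1 : t ≤ 1) :
    xTL H t = ∑' m : ℕ, ((2 : ℝ) ^ (-H)) ^ m * distNearestInt (2 ^ m * t) :=
  tsum_congr fun m => tlTerm_one_eq m h0 h1

/-- Bound on `∑ c ^ m * d m` from `d m ≤ 2 ^ m * h` for `m < n` and from the recursion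
`d (m + 1) ≤ 1 - 2 * d m` for `m ≥ n`. -/
noncomputable def incrementBound (c h : ℝ) (n : ℕ) : ℝ :=
  h * (2 * c) ^ n / (2 * c - 1) + c ^ n / (3 * (1 - c))

lemma abs_tent_sub_tent_le {a b : ℝ} (ha0 : 0 ≤ a) (ha : a ≤ 1 / 2) (hb0 : 0 ≤ b) (hb : b ≤ 1 / 2) :
    |min (2 * b) (1 - 2 * b) - min (2 * a) (1 - 2 * a)| ≤ 1 - 2 * |b - a| := by
  rcases le_total (2 * a) (1 - 2 * a) with h1 | h1 <;>
  rcases le_total (2 * b) (1 - 2 * b) with h2 | h2 <;>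
  simp only [min_eq_left, min_eq_right, h1, h2] <;>
  rcases abs_cases (b - a) with ⟨he, _⟩ | ⟨he, _⟩ <;> rw [he, abs_le] <;>
  constructor <;> linarith

/-- Weights with `w j + 2 * w (j + 1) = c ^ (j + 1)`, making `∑ c ^ j * d j` a nonnegative
combination of the quantities `2 * d j + d (j + 1) - 1 ≤ 0`. -/
noncomputable def tailWeight (c : ℝ) : ℕ → ℝ
  | 0 => 1 / 2
  | j + 1 => c ^ (j + 1) / 2 - tailWeight c j / 2

section TailBound

variable {c : ℝ}

lemma tailWeight_nonneg_and_le (hc : 1 / 2 ≤ c) (j : ℕ) :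
    0 ≤ tailWeight c j ∧ tailWeight c j ≤ c ^ j / 2 := by
  induction j with
  | zero => norm_num [tailWeight]
  | succ j ih =>
    have : c ^ j / 2 ≤ c ^ (j + 1) := by
      rw [pow_succ]; nlinarith [pow_nonneg (show (0 : ℝ) ≤ c by linarith) j]
    simp only [tailWeight]
    constructor <;> linarith [ih.1, ih.2]

lemma sum_range_pow_mul_add_tailWeight_le (hc : 1 / 2 ≤ c) {d : ℕ → ℝ}
    (hrec : ∀ j, d (j + 1) ≤ 1 - 2 * d j) (N : ℕ) :
    ∑ j ∈ Finset.range (N + 1), c ^ j * (d j - 1 / 3) + tailWeight c N * (d (N + 1) - 1 / 3)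
      ≤ 0 := by
  induction N with
  | zero => simp [tailWeight]; linarith [hrec 0]
  | succ N ih =>
    have hw : tailWeight c N + 2 * tailWeight c (N + 1) = c ^ (N + 1) := by
      simp only [tailWeight]; ring
    have hstep : tailWeight c (N + 1) * (2 * (d (N + 1) - 1 / 3) + (d (N + 2) - 1 / 3)) ≤ 0 :=
      mul_nonpos_of_nonneg_of_nonpos (tailWeight_nonneg_and_le hc _).1 (by linarith [hrec (N + 1)])
    rw [Finset.sum_range_succ]
    linear_combination ih + hstep + (1 / 3 - d (N + 1)) * hw

lemma tsum_pow_mul_le_of_add_two_mul_le (hc : 1 / 2 ≤ c) (hc1 : c < 1) {d : ℕ → ℝ}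
    (hd0 : ∀ j, 0 ≤ d j) (hrec : ∀ j, d (j + 1) ≤ 1 - 2 * d j) :
    ∑' j, c ^ j * d j ≤ 1 / (3 * (1 - c)) := by
  have hc0 : 0 ≤ c := by linarith
  refine Real.tsum_le_of_sum_range_le (fun j => mul_nonneg (pow_nonneg hc0 j) (hd0 j)) ?_
  rintro (_ | N)
  · simp only [Finset.range_zero, Finset.sum_empty]; positivity
  have hinv := sum_range_pow_mul_add_tailWeight_le hc hrec N
  have hw := tailWeight_nonneg_and_le hc N
  have hgeom : ∑ j ∈ Finset.range (N + 1), c ^ j * (1 / 3) = (1 - c ^ (N + 1)) / (3 * (1 - c)) := by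
    rw [← Finset.sum_mul, geom_sum_eq hc1.ne, div_mul_eq_mul_div,
      div_eq_div_iff (by linarith) (by linarith)]
    ring
  have hsplit : ∑ j ∈ Finset.range (N + 1), c ^ j * d j =
      ∑ j ∈ Finset.range (N + 1), c ^ j * (d j - 1 / 3) +
        ∑ j ∈ Finset.range (N + 1), c ^ j * (1 / 3) := by
    rw [← Finset.sum_add_distrib]; simp only [← mul_add, sub_add_cancel]
  have hboundary : tailWeight c N * (1 / 3 - d (N + 1)) ≤ c ^ N / 6 := by
    nlinarith [mul_nonneg hw.1 (hd0 (N + 1))]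
  have hlast : c ^ N / 6 ≤ c ^ (N + 1) / (3 * (1 - c)) := by
    rw [div_le_div_iff₀ (by norm_num) (by linarith), pow_succ]
    nlinarith [pow_nonneg hc0 N]
  have hsum : 1 / (3 * (1 - c)) =
      (1 - c ^ (N + 1)) / (3 * (1 - c)) + c ^ (N + 1) / (3 * (1 - c)) := by
    ring
  linarith

lemma summable_pow_mul_of_le_half (hc0 : 0 ≤ c) (hc1 : c < 1) {d : ℕ → ℝ}
    (hd0 : ∀ j, 0 ≤ d j) (hd : ∀ j, d j ≤ 1 / 2) : Summable fun j => c ^ j * d j :=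
  .of_nonneg_of_le (fun j => mul_nonneg (pow_nonneg hc0 j) (hd0 j))
    (fun j => mul_le_mul_of_nonneg_left (hd j) (pow_nonneg hc0 j))
    ((summable_geometric_of_lt_one hc0 hc1).mul_right _)

lemma tsum_pow_mul_le_of_le_two_pow_mul (hc : 1 / 2 < c) (hc1 : c < 1) {h : ℝ} {d : ℕ → ℝ}
    (hd0 : ∀ m, 0 ≤ d m) (hlip : ∀ m, d m ≤ 2 ^ m * h) (hrec : ∀ m, d (m + 1) ≤ 1 - 2 * d m)
    (n : ℕ) :
    ∑' m, c ^ m * d m ≤ incrementBound c h n := by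
  have hc0 : 0 ≤ c := by linarith
  have hhalf : ∀ m, d m ≤ 1 / 2 := fun m => by linarith [hrec m, hd0 (m + 1)]
  rw [incrementBound, ← (summable_pow_mul_of_le_half hc0 hc1 hd0 hhalf).sum_add_tsum_nat_add n]
  gcongr ?_ + ?_
  · calc ∑ m ∈ Finset.range n, c ^ m * d m ≤ ∑ m ∈ Finset.range n, (2 * c) ^ m * h := by
          refine Finset.sum_le_sum fun m _ => ?_
          rw [mul_pow, mul_comm (2 ^ m), mul_assoc]
          exact mul_le_mul_of_nonneg_left (hlip m) (pow_nonneg hc0 m)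
      _ = ((2 * c) ^ n - 1) / (2 * c - 1) * h := by rw [← Finset.sum_mul, geom_sum_eq (by linarith)]
      _ ≤ h * (2 * c) ^ n / (2 * c - 1) := by
          rw [div_mul_eq_mul_div, mul_comm]
          have : 0 ≤ h := by linarith [hlip 0, hd0 0]
          gcongr
          · linarith
          · linarith
  · have htail := tsum_pow_mul_le_of_add_two_mul_le hc.le hc1 (d := fun j => d (j + n))
      (fun j => hd0 _) (fun j => by simpa only [add_right_comm] using hrec (j + n))
    simp only [pow_add, mul_comm (c ^ _) (c ^ n), mul_assoc, tsum_mul_left]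
    calc c ^ n * ∑' j, c ^ j * d (j + n) ≤ c ^ n * (1 / (3 * (1 - c))) := by gcongr
      _ = c ^ n / (3 * (1 - c)) := by ring

end TailBound

lemma one_half_lt_two_rpow_neg {H : ℝ} (hH : H < 1) : 1 / 2 < (2 : ℝ) ^ (-H) := by
  have : (2 : ℝ) ^ (-1 : ℝ) < (2 : ℝ) ^ (-H) :=
    Real.rpow_lt_rpow_of_exponent_lt one_lt_two (by linarith)
  rwa [Real.rpow_neg_one, inv_eq_one_div] at this

lemma abs_xTL_add_sub_le {H t h : ℝ} (hH0 : 0 < H) (hH1 : H < 1) (ht : 0 ≤ t) (hh : 0 ≤ h)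
    (hth : t + h ≤ 1) (n : ℕ) :
    |xTL H (t + h) - xTL H t| ≤ incrementBound ((2 : ℝ) ^ (-H)) h n := by
  set c := (2 : ℝ) ^ (-H)
  have hc := one_half_lt_two_rpow_neg hH1
  have hc1 := two_rpow_neg_lt_one hH0
  set d : ℕ → ℝ := fun m => |distNearestInt (2 ^ m * (t + h)) - distNearestInt (2 ^ m * t)|
  have hsummable : ∀ s : ℝ, Summable fun m : ℕ => c ^ m * distNearestInt (2 ^ m * s) := fun s =>
    summable_pow_mul_of_le_half (by linarith) hc1 (fun _ => distNearestInt.nonneg _)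
      (fun _ => distNearestInt.le_half _)
  have hdiff : xTL H (t + h) - xTL H t = ∑' m, c ^ m * (distNearestInt (2 ^ m * (t + h)) -
      distNearestInt (2 ^ m * t)) := by
    rw [xTL_eq_tsum (by linarith) hth, xTL_eq_tsum ht (by linarith),
      ← (hsummable _).tsum_sub (hsummable _)]
    simp only [mul_sub]
  have hnorm : ∀ m, ‖c ^ m * (distNearestInt (2 ^ m * (t + h)) - distNearestInt (2 ^ m * t))‖ =
      c ^ m * d m := fun m => by
    rw [Real.norm_eq_abs, abs_mul, abs_of_nonneg (pow_nonneg (by linarith) m)]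
  have hlip : ∀ m, d m ≤ 2 ^ m * h := fun m =>
    (distNearestInt.abs_sub_le _ _).trans_eq (by rw [← mul_sub, add_sub_cancel_left,
      abs_of_nonneg (by positivity)])
  have hrec : ∀ m, d (m + 1) ≤ 1 - 2 * d m := fun m => by
    simp only [d, pow_succ, mul_comm _ (2 : ℝ), mul_assoc, distNearestInt.two_mul]
    exact abs_tent_sub_tent_le (distNearestInt.nonneg _) (distNearestInt.le_half _)
      (distNearestInt.nonneg _) (distNearestInt.le_half _)
  rw [hdiff, ← Real.norm_eq_abs]
  refine (norm_tsum_le_tsum_norm ?_).trans ?_ <;> simp only [hnorm]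
  · refine summable_pow_mul_of_le_half (by linarith) hc1 (fun _ => abs_nonneg _) fun m => ?_
    rw [abs_sub_le_iff]
    constructor <;> linarith [distNearestInt.nonneg (2 ^ m * (t + h)),
      distNearestInt.le_half (2 ^ m * (t + h)), distNearestInt.nonneg (2 ^ m * t),
      distNearestInt.le_half (2 ^ m * t)]
  · exact tsum_pow_mul_le_of_le_two_pow_mul hc hc1 (fun m => abs_nonneg _) hlip hrec n

lemma omegaH_eq_incrementBound {H h : ℝ} {n : ℕ} (hn : nuFloor h = n + 1) :
    omegaH H h = incrementBound ((2 : ℝ) ^ (-H)) h n := by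
  have h1 : ((nuFloor h : ℝ) - 1) * (1 - H) = (1 - H) * n := by rw [hn]; push_cast; ring
  have h2 : (1 - (nuFloor h : ℝ)) * H = (-H) * n := by rw [hn]; push_cast; ring
  have h3 : (2 : ℝ) ^ (1 - H) = 2 * (2 : ℝ) ^ (-H) := by
    rw [sub_eq_add_neg, Real.rpow_add two_pos, Real.rpow_one]
  rw [omegaH, incrementBound, h1, h2, Real.rpow_mul_natCast two_pos.le,
    Real.rpow_mul_natCast two_pos.le, h3]

lemma one_le_nuFloor {h : ℝ} (hh : 0 < h) (hh2 : h ≤ 1 / 2) : 1 ≤ nuFloor h := by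
  have : Real.logb 2 h ≤ -1 := by
    rw [Real.logb_le_iff_le_rpow one_lt_two hh, Real.rpow_neg_one]; linarith
  rw [nuFloor, Int.le_floor]
  push_cast
  linarith

lemma abs_xTL_add_sub_le_omegaH {H t h : ℝ} (hH0 : 0 < H) (hH1 : H < 1) (ht : 0 ≤ t)
    (hh : 0 < h) (hh2 : h ≤ 1 / 2) (hth : t + h ≤ 1) :
    |xTL H (t + h) - xTL H t| ≤ omegaH H h := by
  obtain ⟨n, hn⟩ := Int.eq_ofNat_of_zero_le (sub_nonneg.2 (one_le_nuFloor hh hh2))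
  rw [omegaH_eq_incrementBound (n := n) (by omega)]
  exact abs_xTL_add_sub_le hH0 hH1 ht hh.le hth n

lemma nuFloor_one_div_three_mul_two_pow (n : ℕ) : nuFloor (1 / (3 * 2 ^ n)) = n + 1 := by
  have hlog : -Real.logb 2 (1 / (3 * 2 ^ n)) = Real.logb 2 3 + n := by
    rw [one_div, Real.logb_inv, neg_neg, Real.logb_mul (by norm_num) (by positivity),
      Real.logb_pow, Real.logb_self_eq_one one_lt_two, mul_one]
  have hfloor : ⌊Real.logb 2 3⌋ = 1 := by
    rw [Int.floor_eq_iff, Real.le_logb_iff_rpow_le one_lt_two (by norm_num),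
      Real.logb_lt_iff_lt_rpow one_lt_two (by norm_num)]
    norm_num
  rw [nuFloor, hlog, ← Int.cast_natCast, Int.floor_add_intCast, hfloor, add_comm]

lemma one_div_three_mul_two_pow_le_half (n : ℕ) : 1 / (3 * 2 ^ n : ℝ) ≤ 1 / 2 := by
  have : (1 : ℝ) ≤ 2 ^ n := one_le_pow₀ one_le_two
  rw [div_le_div_iff₀ (by positivity) two_pos]
  linarith

lemma tendsto_one_div_three_mul_two_pow :
    Tendsto (fun n : ℕ => 1 / (3 * 2 ^ n : ℝ)) atTop (nhdsWithin 0 (Set.Ioi 0)) := by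
  refine tendsto_nhdsWithin_iff.2 ⟨?_, .of_forall fun n => Set.mem_Ioi.2 (by positivity)⟩
  have h := (tendsto_pow_atTop_nhds_zero_of_lt_one (r := (1 / 2 : ℝ)) (by norm_num)
    (by norm_num)).const_mul (1 / 3)
  rw [mul_zero] at h
  exact h.congr fun n => by simp only [div_pow, one_pow]; ring

/-- At `h = 1 / (3 * 2 ^ n)` one has `2 ^ m * h ≤ 1 / 2` for `m < n` and
`2 ^ (j + n) * h = 2 ^ j / 3`, so every term of the series is explicit. -/
lemma xTL_one_div_three_mul_two_pow {H : ℝ} (hH0 : 0 < H) (hH1 : H < 1) (n : ℕ) :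
    xTL H (1 / (3 * 2 ^ n)) = 1 / (3 * 2 ^ n) * ((2 * (2 : ℝ) ^ (-H)) ^ n - 1) /
      (2 * (2 : ℝ) ^ (-H) - 1) + ((2 : ℝ) ^ (-H)) ^ n / (3 * (1 - (2 : ℝ) ^ (-H))) := by
  have hc := one_half_lt_two_rpow_neg hH1
  have hc1 := two_rpow_neg_lt_one hH0
  set c := (2 : ℝ) ^ (-H)
  rw [xTL_eq_tsum (by positivity) ((one_div_three_mul_two_pow_le_half n).trans (by norm_num)),
    ← (summable_pow_mul_of_le_half (by linarith) hc1 (fun _ => distNearestInt.nonneg _)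
      (fun _ => distNearestInt.le_half _)).sum_add_tsum_nat_add n]
  have hhead : ∀ m ∈ Finset.range n,
      c ^ m * distNearestInt (2 ^ m * (1 / (3 * 2 ^ n))) = (2 * c) ^ m * (1 / (3 * 2 ^ n)) := by
    intro m hm
    have hm : (2 : ℝ) ^ m ≤ 2 ^ n := pow_le_pow_right₀ one_le_two (Finset.mem_range.1 hm).le
    have hle : (2 : ℝ) ^ m * (1 / (3 * 2 ^ n)) ≤ 1 / 2 := by
      have : (1 : ℝ) ≤ 2 ^ n := one_le_pow₀ one_le_two
      rw [← mul_div_assoc, mul_one, div_le_iff₀ (by positivity)]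
      linarith
    rw [distNearestInt.eq_self (by positivity) hle]
    ring
  have htail : ∀ j : ℕ,
      c ^ (j + n) * distNearestInt (2 ^ (j + n) * (1 / (3 * 2 ^ n))) =
        c ^ n * (c ^ j * (1 / 3)) := by
    intro j
    rw [show (2 : ℝ) ^ (j + n) * (1 / (3 * 2 ^ n)) = 2 ^ j / 3 by field_simp; ring,
      distNearestInt.two_pow_div_three, pow_add]
    ring
  rw [Finset.sum_congr rfl hhead, ← Finset.sum_mul, geom_sum_eq (by linarith), tsum_congr htail,
    tsum_mul_left, tsum_mul_right, tsum_geometric_of_lt_one (by linarith) hc1]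
  have h2c : 2 * c - 1 ≠ 0 := by linarith
  have h1c : 1 - c ≠ 0 := by linarith
  field_simp

lemma omegaH_one_div_three_mul_two_pow {H : ℝ} (hH0 : 0 < H) (hH1 : H < 1) (n : ℕ) :
    omegaH H (1 / (3 * 2 ^ n)) = ((2 : ℝ) ^ (-H)) ^ (n + 1) /
      (3 * (2 * (2 : ℝ) ^ (-H) - 1) * (1 - (2 : ℝ) ^ (-H))) := by
  have hc := one_half_lt_two_rpow_neg hH1
  have hc1 := two_rpow_neg_lt_one hH0
  rw [omegaH_eq_incrementBound (nuFloor_one_div_three_mul_two_pow n), incrementBound]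
  set c := (2 : ℝ) ^ (-H)
  have h2c : 2 * c - 1 ≠ 0 := by linarith
  have h1c : 1 - c ≠ 0 := by linarith
  rw [mul_pow]
  field_simp
  ring

lemma xTL_div_omegaH_one_div_three_mul_two_pow {H : ℝ} (hH0 : 0 < H) (hH1 : H < 1) (n : ℕ) :
    xTL H (1 / (3 * 2 ^ n)) / omegaH H (1 / (3 * 2 ^ n)) =
      1 - (1 - (2 : ℝ) ^ (-H)) / (2 : ℝ) ^ (-H) * (1 / (2 * (2 : ℝ) ^ (-H))) ^ n := by
  have hc := one_half_lt_two_rpow_neg hH1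
  have hc1 := two_rpow_neg_lt_one hH0
  rw [xTL_one_div_three_mul_two_pow hH0 hH1, omegaH_one_div_three_mul_two_pow hH0 hH1]
  set c := (2 : ℝ) ^ (-H)
  have h2c : 2 * c - 1 ≠ 0 := by linarith
  have h1c : 1 - c ≠ 0 := by linarith
  have hc0 : c ≠ 0 := by linarith
  rw [div_pow, one_pow, mul_pow]
  field_simp
  ring

lemma xTL_zero (H : ℝ) : xTL H 0 = 0 := by
  simp [xTL_eq_tsum le_rfl zero_le_one, distNearestInt]

section Modulus

variable {H h : ℝ}

lemma abs_xTL_add_sub_div_omegaH_le_one (hH0 : 0 < H) (hH1 : H < 1) (hh : 0 < h)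
    (hh2 : h ≤ 1 / 2) (t : Set.Icc (0 : ℝ) (1 - h)) :
    |xTL H ((t : ℝ) + h) - xTL H t| / omegaH H h ≤ 1 := by
  have hbound := abs_xTL_add_sub_le_omegaH hH0 hH1 t.2.1 hh hh2 (by linarith [t.2.2])
  exact div_le_one_of_le₀ hbound ((abs_nonneg _).trans hbound)

lemma iSup_abs_xTL_add_sub_div_omegaH_le_one (hH0 : 0 < H) (hH1 : H < 1) (hh : 0 < h)
    (hh2 : h ≤ 1 / 2) :
    ⨆ t : Set.Icc (0 : ℝ) (1 - h), |xTL H ((t : ℝ) + h) - xTL H t| / omegaH H h ≤ 1 :=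
  have : Nonempty (Set.Icc (0 : ℝ) (1 - h)) := ⟨⟨0, le_rfl, by linarith⟩⟩
  ciSup_le (abs_xTL_add_sub_div_omegaH_le_one hH0 hH1 hh hh2)

lemma xTL_div_omegaH_le_iSup (hH0 : 0 < H) (hH1 : H < 1) (hh : 0 < h) (hh2 : h ≤ 1 / 2) :
    xTL H h / omegaH H h ≤
      ⨆ t : Set.Icc (0 : ℝ) (1 - h), |xTL H ((t : ℝ) + h) - xTL H t| / omegaH H h := by
  refine le_ciSup_of_le ⟨1, ?_⟩ ⟨0, le_rfl, by linarith⟩ ?_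
  · rintro _ ⟨t, rfl⟩
    exact abs_xTL_add_sub_div_omegaH_le_one hH0 hH1 hh hh2 t
  · have hω := abs_xTL_add_sub_le_omegaH hH0 hH1 le_rfl hh hh2 (by linarith)
    simp only [zero_add, xTL_zero, sub_zero] at hω ⊢
    exact div_le_div_of_nonneg_right (le_abs_self _) ((abs_nonneg _).trans hω)

end Modulus

lemma Filter.limsup_eq_of_eventually_le_of_tendsto_comp {α : Type*} {l : Filter α} {F : α → ℝ}
    {u : ℕ → α} {a : ℝ} (hle : ∀ᶠ x in l, F x ≤ a) (hu : Tendsto u atTop l)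
    (hFu : Tendsto (F ∘ u) atTop (nhds a)) : limsup F l = a := by
  have hfreq : ∀ b < a, ∃ᶠ x in l, b ≤ F x := fun b hb =>
    hu.frequently (hFu.eventually (eventually_ge_nhds hb)).frequently
  refine le_antisymm (limsup_le_of_le ?_ hle) (le_of_forall_lt_imp_le_of_dense fun b hb => ?_)
  · exact IsCoboundedUnder.of_frequently_ge (hfreq (a - 1) (by linarith))
  · exact le_limsup_of_frequently_le (hfreq b hb) ⟨a, hle⟩

theorem stmt8 (H : ℝ) (hH : H ∈ Set.Ioo (0:ℝ) 1) :
    Filter.limsup (fun h : ℝ => ⨆ t : Set.Icc (0:ℝ) (1 - h),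
        |xTL H ((t : ℝ) + h) - xTL H (t : ℝ)| / omegaH H h)
      (nhdsWithin 0 (Set.Ioi 0)) = 1 := by
  obtain ⟨hH0, hH1⟩ := hH
  have hc := one_half_lt_two_rpow_neg hH1
  have hc1 := two_rpow_neg_lt_one hH0
  set c := (2 : ℝ) ^ (-H)
  have hu_pos : ∀ n : ℕ, 0 < 1 / (3 * 2 ^ n : ℝ) := fun n => by positivity
  have hlower : Tendsto (fun n : ℕ => 1 - (1 - c) / c * (1 / (2 * c)) ^ n) atTop (nhds 1) := by
    simpa using ((tendsto_pow_atTop_nhds_zero_of_lt_one (r := 1 / (2 * c)) (by positivity)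
      (by rw [div_lt_one (by linarith)]; linarith)).const_mul ((1 - c) / c)).const_sub 1
  refine limsup_eq_of_eventually_le_of_tendsto_comp ?_ tendsto_one_div_three_mul_two_pow ?_
  · filter_upwards [Ioo_mem_nhdsGT (show (0 : ℝ) < 1 / 2 by norm_num)] with h hh
    exact iSup_abs_xTL_add_sub_div_omegaH_le_one hH0 hH1 hh.1 hh.2.le
  · refine tendsto_of_tendsto_of_tendsto_of_le_of_le hlower tendsto_const_nhds (fun n => ?_)
      (fun n => iSup_abs_xTL_add_sub_div_omegaH_le_one hH0 hH1 (hu_pos n)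
        (one_div_three_mul_two_pow_le_half n))
    rw [← xTL_div_omegaH_one_div_three_mul_two_pow hH0 hH1]
    exact xTL_div_omegaH_le_iSup hH0 hH1 (hu_pos n) (one_div_three_mul_two_pow_le_half n)
end
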